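/- The longitudinal projection of the YM bracket is given by: for any modes (ξ₁,k₁), (ξ₂,k₂), B([ξ₁,ξ₂]_YM, k₁+k₂) = (ξ₁·k₂)(ξ₂·k₂) − (ξ₁·k₁)(ξ₂·k₁) + (k₁² − k₂²)(ξ₁·ξ₂); in particular, if both modes are transverse ((ξᵢ·kᵢ)=0) and on-shell (k₁² = k₂² = 0), then the YM bracket is transverse: B([ξ₁,ξ₂]_YM, k₁+k₂) = 0. -/

import Mathlib

/-!
Pairing with `K = k₁ + k₂` only needs linearity in the first slot, `ξᵢ·K = ξᵢ·k₁ + ξᵢ·k₂`,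
except for the term `(ξ₁·ξ₂)(k₁ − k₂)`, where symmetry of `B` gives `(k₁ − k₂)·K = k₁² − k₂²`;
the remaining mixed terms cancel in pairs.
-/

namespace Stmt19

variable {V : Type*} [AddCommGroup V] [Module ℝ V]

/-- The YM bracket of modes (polarization part). -/
def ymPol (B : LinearMap.BilinForm ℝ V) (p q : V × V) : V :=
  (2 * B p.1 q.2) • q.1 - (2 * B q.1 p.2) • p.1 + B p.1 q.1 • (p.2 - q.2)
    + B p.1 p.2 • q.1 - B q.1 q.2 • p.1

theorem _root_.LinearMap.BilinForm.IsSymm.apply_sub_add {R M : Type*} [CommRing R]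
    [AddCommGroup M] [Module R M] {B : LinearMap.BilinForm R M} (hB : B.IsSymm) (x y : M) :
    B (x - y) (x + y) = B x x - B y y := by
  simp only [map_sub, map_add, LinearMap.sub_apply, hB.eq y x]
  ring

theorem ymPol_apply (B : LinearMap.BilinForm ℝ V) (ξ₁ k₁ ξ₂ k₂ v : V) :
    B (ymPol B (ξ₁, k₁) (ξ₂, k₂)) v
      = (2 * B ξ₁ k₂ + B ξ₁ k₁) * B ξ₂ v - (2 * B ξ₂ k₁ + B ξ₂ k₂) * B ξ₁ v
        + B ξ₁ ξ₂ * B (k₁ - k₂) v := by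
  simp only [ymPol, map_add, map_sub, map_smul, LinearMap.add_apply, LinearMap.sub_apply,
    LinearMap.smul_apply, smul_eq_mul]
  ring

theorem ymPol_apply_add (B : LinearMap.BilinForm ℝ V) (hB : B.IsSymm) (ξ₁ k₁ ξ₂ k₂ : V) :
    B (ymPol B (ξ₁, k₁) (ξ₂, k₂)) (k₁ + k₂)
      = B ξ₁ k₂ * B ξ₂ k₂ - B ξ₁ k₁ * B ξ₂ k₁ + (B k₁ k₁ - B k₂ k₂) * B ξ₁ ξ₂ := by
  rw [ymPol_apply, hB.apply_sub_add, map_add, map_add]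
  ring

/-- The longitudinal projection of the YM bracket:
`B([ξ₁,ξ₂]_YM, k₁+k₂) = (ξ₁·k₂)(ξ₂·k₂) − (ξ₁·k₁)(ξ₂·k₁) + (k₁²−k₂²)(ξ₁·ξ₂)`;
in particular, if both modes are transverse and on-shell then the YM bracket
is transverse. -/
theorem ym_longitudinal_projection (B : LinearMap.BilinForm ℝ V) (hB : B.IsSymm)
    (ξ₁ k₁ ξ₂ k₂ : V) :
    (B (ymPol B (ξ₁, k₁) (ξ₂, k₂)) (k₁ + k₂)
        = B ξ₁ k₂ * B ξ₂ k₂ - B ξ₁ k₁ * B ξ₂ k₁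
          + (B k₁ k₁ - B k₂ k₂) * B ξ₁ ξ₂)
    ∧ (B ξ₁ k₁ = 0 → B ξ₂ k₂ = 0 → B k₁ k₁ = 0 → B k₂ k₂ = 0 →
        B (ymPol B (ξ₁, k₁) (ξ₂, k₂)) (k₁ + k₂) = 0) := by
  refine ⟨ymPol_apply_add B hB ξ₁ k₁ ξ₂ k₂, fun h₁ h₂ hk₁ hk₂ => ?_⟩
  rw [ymPol_apply_add B hB, h₁, h₂, hk₁, hk₂]
  ring

end Stmt19
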